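/- Let η₁,…,η_m be i.i.d. with P(η_k = 1/p) = p, P(η_k = 0) = 1−p, and let c₁,…,c_m ∈ ℝ, y_i, y_j ∈ ℝ with errors e_i^η = ∑_r η_r c_r^{(i)} − y_i. For k ≠ r, Cov(e_i^η η_k, e_j^η η_r) = (1/p − 1)·∑_{k'≠k, k'≠r} c_{k'}^{(i)} c_{k'}^{(j)} + (1/p − 1)·c_k^{(j)} e_{i,∖k,∖r} + (1/p − 1)·c_r^{(i)} e_{j,∖k,∖r} + (1/p² − 1/p)·(c_r^{(i)} c_r^{(j)} + c_k^{(i)} c_k^{(j)}) + (1/p² − 1)·c_r^{(i)} c_k^{(j)}, where e_{i,∖k,∖r} := ∑_{l≠k,l≠r} c_l^{(i)} − y_i. -/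

import Mathlib

open MeasureTheory ProbabilityTheory Finset

/-!
A mask value `x ∈ {1/p, 0}` satisfies `x² = x / p`, so next to the factor `η_k η_r` every further
occurrence of `η_k` or `η_r` may be replaced by `1/p`. Thus `(e_i η_k)(e_j η_r) = η_k η_r · U V`
with `U = ∑_{l ≠ k,r} η_l c_l^{(i)} + (c_k^{(i)} + c_r^{(i)}) / p - y_i` and `V` alike, both
independent of `η_k η_r`. Since `E[η_k η_r] = 1`, the mixed moment is
`E[U V] = Cov(U, V) + E U E V`, and `Cov(U, V) = (1/p - 1) ∑_{l ≠ k,r} c_l^{(i)} c_l^{(j)}`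
because the masks are independent with variance `1/p - 1`. The means `E[e_i η_k]` and
`E[e_j η_r]` are computed the same way.
-/

lemma mul_add_mul_self_of_eq_or {x p : ℝ} (hx : x = 1 / p ∨ x = 0) (a c : ℝ) :
    x * (a + c * x) = x * (a + c / p) := by
  rcases hx with rfl | rfl <;> ring

section DropoutVector

variable {ι : Type*} [Fintype ι] [DecidableEq ι] {x : ι → ℝ} {p : ℝ}

lemma sum_mul_sub_mul_of_eq_or (hx : ∀ i, x i = 1 / p ∨ x i = 0) (c : ι → ℝ) (y : ℝ)
    (k : ι) :
    (∑ l, x l * c l - y) * x k = x k * (∑ l ∈ univ.erase k, x l * c l + (c k / p - y)) := by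
  rw [← add_sum_erase univ _ (mem_univ k)]
  calc _ = x k * ((∑ l ∈ univ.erase k, x l * c l - y) + c k * x k) := by ring
    _ = _ := by rw [mul_add_mul_self_of_eq_or (hx k)]; ring

lemma sum_mul_sub_mul_mul_sum_mul_sub_mul_of_eq_or (hx : ∀ i, x i = 1 / p ∨ x i = 0)
    (ci cj : ι → ℝ) (yi yj : ℝ) {k r : ι} (hkr : k ≠ r) :
    ((∑ l, x l * ci l - yi) * x k) * ((∑ l, x l * cj l - yj) * x r)
      = (∏ l ∈ {k, r}, x l)
        * ((∑ l ∈ (univ.erase k).erase r, x l * ci l + (ci k / p + ci r / p - yi))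
          * (∑ l ∈ (univ.erase k).erase r, x l * cj l + (cj r / p + cj k / p - yj))) := by
  rw [sum_mul_sub_mul_of_eq_or hx, sum_mul_sub_mul_of_eq_or hx,
    ← add_sum_erase (univ.erase k) _ (mem_erase.2 ⟨hkr.symm, mem_univ r⟩),
    ← add_sum_erase (univ.erase r) _ (mem_erase.2 ⟨hkr, mem_univ k⟩),
    erase_right_comm (a := r), prod_pair hkr]
  set Ai := ∑ l ∈ (univ.erase k).erase r, x l * ci l
  set Aj := ∑ l ∈ (univ.erase k).erase r, x l * cj l
  calc _ = (x r * (Ai + (ci k / p - yi) + ci r * x r))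
        * (x k * (Aj + (cj r / p - yj) + cj k * x k)) := by ring
    _ = (x r * (Ai + (ci k / p - yi) + ci r / p)) * (x k * (Aj + (cj r / p - yj) + cj k / p)) := by
      rw [mul_add_mul_self_of_eq_or (hx r), mul_add_mul_self_of_eq_or (hx k)]
    _ = _ := by ring

end DropoutVector

section Bernoulli

variable {Ω : Type*} [MeasurableSpace Ω] {μ : Measure Ω} {X : Ω → ℝ} {p : ℝ}

lemma memLp_of_eq_or [IsFiniteMeasure μ] (hX : Measurable X)
    (hval : ∀ ω, X ω = 1 / p ∨ X ω = 0) (q : ENNReal) : MemLp X q μ :=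
  MemLp.of_bound hX.aestronglyMeasurable |1 / p| <| ae_of_all _ fun ω => by
    rcases hval ω with h | h <;> simp [h]

lemma integral_eq_one_of_eq_or (hp : 0 < p) (hX : Measurable X)
    (hval : ∀ ω, X ω = 1 / p ∨ X ω = 0) (hdist : μ {ω | X ω = 1 / p} = ENNReal.ofReal p) :
    ∫ ω, X ω ∂μ = 1 := by
  have hind : X = {ω | X ω = 1 / p}.indicator (fun _ => 1 / p) := by
    ext ω
    rcases hval ω with h | h
    · simp [h]
    · rw [Set.indicator_of_notMem (by simp [h, hp.ne])]
      exact h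
  rw [hind, integral_indicator_const (s := {ω | X ω = 1 / p}) _ (hX (measurableSet_singleton _)),
    measureReal_def, hdist, ENNReal.toReal_ofReal hp.le, smul_eq_mul, mul_one_div_cancel hp.ne']

lemma variance_eq_of_eq_or [IsProbabilityMeasure μ] (hp : 0 < p) (hX : Measurable X)
    (hval : ∀ ω, X ω = 1 / p ∨ X ω = 0) (hdist : μ {ω | X ω = 1 / p} = ENNReal.ofReal p) :
    Var[X; μ] = 1 / p - 1 := by
  have hsq : X ^ 2 = fun ω => 1 / p * X ω := by
    ext ω
    rcases hval ω with h | h <;> simp [h, sq]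
  rw [variance_eq_sub (memLp_of_eq_or hX hval 2), hsq, integral_const_mul,
    integral_eq_one_of_eq_or hp hX hval hdist]
  ring

end Bernoulli

section Independent

variable {Ω ι : Type*} [MeasurableSpace Ω] {μ : Measure Ω} {η : ι → Ω → ℝ}

lemma integral_finset_prod_of_iIndepFun (hindep : iIndepFun η μ)
    (hmeas : ∀ i, Measurable (η i)) (T : Finset ι) :
    ∫ ω, ∏ i ∈ T, η i ω ∂μ = ∏ i ∈ T, ∫ ω, η i ω ∂μ := by
  have hT : iIndepFun (fun i : T => η i) μ := hindep.precomp Subtype.val_injective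
  simp_rw [← prod_coe_sort T]
  exact hT.integral_fun_prod_eq_prod_integral fun i => (hmeas i).aestronglyMeasurable

lemma covariance_sum_mul_sum_mul [IsFiniteMeasure μ] (hindep : iIndepFun η μ)
    (hL2 : ∀ i, MemLp (η i) 2 μ) (S : Finset ι) (a b : ι → ℝ) :
    cov[fun ω => ∑ i ∈ S, η i ω * a i, fun ω => ∑ i ∈ S, η i ω * b i; μ]
      = ∑ i ∈ S, a i * b i * Var[η i; μ] := by
  classical
  rw [covariance_fun_sum_fun_sum' (fun i _ => (hL2 i).mul_const _)
    (fun i _ => (hL2 i).mul_const _)]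
  refine sum_congr rfl fun i hi => ?_
  rw [sum_eq_single_of_mem i hi fun j _ hji => ?_]
  · rw [covariance_mul_const_left, covariance_mul_const_right,
      covariance_self (hL2 i).aestronglyMeasurable.aemeasurable]
    ring
  · rw [covariance_mul_const_left, covariance_mul_const_right,
      (hindep.indepFun hji.symm).covariance_eq_zero (hL2 i) (hL2 j)]
    ring

lemma indepFun_sum_mul_prod (hindep : iIndepFun η μ)
    (hmeas : ∀ i, Measurable (η i)) {S T : Finset ι} (hST : Disjoint S T) (a b : ι → ℝ) :
    IndepFun (fun ω => (∑ i ∈ S, η i ω * a i, ∑ i ∈ S, η i ω * b i))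
      (fun ω => ∏ i ∈ T, η i ω) μ := by
  have h := (hindep.indepFun_finset S T hST hmeas).comp
    (φ := fun x : S → ℝ => (∑ i, x i * a i, ∑ i, x i * b i))
    (ψ := fun x : T → ℝ => ∏ i, x i)
    (by fun_prop) (by fun_prop)
  simp_rw [← sum_coe_sort S, ← prod_coe_sort T]
  exact h

lemma integral_prod_mul_comp_sum (hindep : iIndepFun η μ) (hmeas : ∀ i, Measurable (η i))
    {S T : Finset ι} (hST : Disjoint S T) (a b : ι → ℝ) {g : ℝ × ℝ → ℝ} (hg : Measurable g) :
    ∫ ω, (∏ i ∈ T, η i ω) * g (∑ i ∈ S, η i ω * a i, ∑ i ∈ S, η i ω * b i) ∂μ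
      = (∏ i ∈ T, ∫ ω, η i ω ∂μ)
        * ∫ ω, g (∑ i ∈ S, η i ω * a i, ∑ i ∈ S, η i ω * b i) ∂μ := by
  rw [← integral_finset_prod_of_iIndepFun hindep hmeas T]
  exact ((indepFun_sum_mul_prod hindep hmeas hST a b).comp hg measurable_id).symm
    |>.integral_fun_mul_eq_mul_integral (by fun_prop)
      (hg.comp (by fun_prop)).aestronglyMeasurable

end Independent

section Dropout

variable {Ω ι : Type*} [MeasurableSpace Ω] {μ : Measure Ω} [IsProbabilityMeasure μ]
  {η : ι → Ω → ℝ} {p : ℝ}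

lemma integral_sum_mul_add_of_eq_or (hp : 0 < p) (hmeas : ∀ i, Measurable (η i))
    (hval : ∀ i ω, η i ω = 1 / p ∨ η i ω = 0)
    (hdist : ∀ i, μ {ω | η i ω = 1 / p} = ENNReal.ofReal p)
    (S : Finset ι) (a : ι → ℝ) (c : ℝ) :
    ∫ ω, ∑ i ∈ S, η i ω * a i + c ∂μ = ∑ i ∈ S, a i + c := by
  have hint i : Integrable (η i) μ :=
    memLp_one_iff_integrable.1 (memLp_of_eq_or (hmeas i) (hval i) 1)
  rw [integral_add (integrable_finsetSum _ fun i _ => (hint i).mul_const _) (integrable_const c),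
    integral_finsetSum _ fun i _ => (hint i).mul_const _]
  simp [integral_mul_const, integral_eq_one_of_eq_or hp (hmeas _) (hval _) (hdist _)]

lemma integral_dropout_mul_sum_add (hp : 0 < p) (hmeas : ∀ i, Measurable (η i))
    (hindep : iIndepFun η μ) (hval : ∀ i ω, η i ω = 1 / p ∨ η i ω = 0)
    (hdist : ∀ i, μ {ω | η i ω = 1 / p} = ENNReal.ofReal p)
    {S : Finset ι} {k : ι} (hk : k ∉ S) (a : ι → ℝ) (c : ℝ) :
    ∫ ω, η k ω * (∑ i ∈ S, η i ω * a i + c) ∂μ = ∑ i ∈ S, a i + c := by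
  have h := integral_prod_mul_comp_sum (μ := μ) hindep hmeas
    (disjoint_singleton_right.2 hk) a a (g := fun x => x.1 + c) (by fun_prop)
  simp only [prod_singleton] at h
  rw [h, integral_sum_mul_add_of_eq_or hp hmeas hval hdist,
    integral_eq_one_of_eq_or hp (hmeas k) (hval k) (hdist k), one_mul]

lemma integral_dropout_mul_sum_add_mul_sum_add (hp : 0 < p) (hmeas : ∀ i, Measurable (η i))
    (hindep : iIndepFun η μ) (hval : ∀ i ω, η i ω = 1 / p ∨ η i ω = 0)
    (hdist : ∀ i, μ {ω | η i ω = 1 / p} = ENNReal.ofReal p)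
    {S T : Finset ι} (hST : Disjoint S T) (a b : ι → ℝ) (α β : ℝ) :
    ∫ ω, (∏ i ∈ T, η i ω) * ((∑ i ∈ S, η i ω * a i + α) * (∑ i ∈ S, η i ω * b i + β)) ∂μ
      = (1 / p - 1) * ∑ i ∈ S, a i * b i + (∑ i ∈ S, a i + α) * (∑ i ∈ S, b i + β) := by
  have hL2 i : MemLp (η i) 2 μ := memLp_of_eq_or (hmeas i) (hval i) 2
  have hsum (c : ι → ℝ) : MemLp (fun ω => ∑ i ∈ S, η i ω * c i) 2 μ :=
    memLp_finsetSum _ fun i _ => (hL2 i).mul_const _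
  have hsum_add (c : ι → ℝ) (γ : ℝ) : MemLp (fun ω => ∑ i ∈ S, η i ω * c i + γ) 2 μ :=
    (hsum c).add (memLp_const γ)
  have hcov := covariance_eq_sub (hsum_add a α) (hsum_add b β)
  rw [covariance_add_const_left ((hsum a).integrable one_le_two),
    covariance_add_const_right ((hsum b).integrable one_le_two),
    covariance_sum_mul_sum_mul hindep hL2,
    integral_sum_mul_add_of_eq_or hp hmeas hval hdist,
    integral_sum_mul_add_of_eq_or hp hmeas hval hdist] at hcov
  have h := integral_prod_mul_comp_sum (μ := μ) hindep hmeas hST a b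
    (g := fun x => (x.1 + α) * (x.2 + β)) (by fun_prop)
  dsimp only at h
  rw [h, prod_eq_one fun i _ => integral_eq_one_of_eq_or hp (hmeas i) (hval i) (hdist i),
    one_mul]
  have hvar : ∑ i ∈ S, a i * b i * Var[η i; μ] = (1 / p - 1) * ∑ i ∈ S, a i * b i := by
    rw [mul_sum]
    exact sum_congr rfl fun i _ => by
      rw [variance_eq_of_eq_or hp (hmeas i) (hval i) (hdist i)]; ring
  simp only [hvar, Pi.mul_apply] at hcov
  linarith

end Dropout

theorem stmt_4_general {Ω : Type*} [MeasurableSpace Ω] (μ : Measure Ω) [IsProbabilityMeasure μ]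
    (m : ℕ) (p : ℝ) (hp : 0 < p)
    (η : Fin m → Ω → ℝ) (hmeas : ∀ k, Measurable (η k))
    (hindep : iIndepFun η μ)
    (hval : ∀ k ω, η k ω = 1 / p ∨ η k ω = 0)
    (hdist : ∀ k, μ {ω | η k ω = 1 / p} = ENNReal.ofReal p)
    (ci cj : Fin m → ℝ) (yi yj : ℝ) (k r : Fin m) (hkr : k ≠ r) :
    (∫ ω, (((∑ l, η l ω * ci l) - yi) * η k ω) * (((∑ l, η l ω * cj l) - yj) * η r ω) ∂μ)
      - (∫ ω, ((∑ l, η l ω * ci l) - yi) * η k ω ∂μ)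
        * (∫ ω, ((∑ l, η l ω * cj l) - yj) * η r ω ∂μ)
    = (1 / p - 1) * (∑ k' ∈ (univ.erase k).erase r, ci k' * cj k')
      + (1 / p - 1) * cj k * ((∑ l ∈ (univ.erase k).erase r, ci l) - yi)
      + (1 / p - 1) * ci r * ((∑ l ∈ (univ.erase k).erase r, cj l) - yj)
      + (1 / p ^ 2 - 1 / p) * (ci r * cj r + ci k * cj k)
      + (1 / p ^ 2 - 1) * ci r * cj k := by
  have hX ω := sum_mul_sub_mul_of_eq_or (fun l => hval l ω) ci yi k
  have hY ω := sum_mul_sub_mul_of_eq_or (fun l => hval l ω) cj yj r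
  have hXY ω := sum_mul_sub_mul_mul_sum_mul_sub_mul_of_eq_or (fun l => hval l ω) ci cj yi yj hkr
  simp only [hXY]
  simp only [hX, hY]
  rw [integral_dropout_mul_sum_add_mul_sum_add hp hmeas hindep hval hdist (by simp) ci cj,
    integral_dropout_mul_sum_add hp hmeas hindep hval hdist (notMem_erase k univ),
    integral_dropout_mul_sum_add hp hmeas hindep hval hdist (notMem_erase r univ),
    ← add_sum_erase (univ.erase k) ci (mem_erase.2 ⟨hkr.symm, mem_univ r⟩),
    ← add_sum_erase (univ.erase r) cj (mem_erase.2 ⟨hkr, mem_univ k⟩),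
    erase_right_comm (a := r)]
  field_simp
  ring

/-- Off-diagonal covariance of the dropout noise for `k ≠ r`. -/
theorem stmt_4 {Ω : Type*} [MeasurableSpace Ω] (μ : Measure Ω) [IsProbabilityMeasure μ]
    (m : ℕ) (p : ℝ) (hp : 0 < p) (hp1 : p ≤ 1)
    (η : Fin m → Ω → ℝ) (hmeas : ∀ k, Measurable (η k))
    (hindep : iIndepFun η μ)
    (hval : ∀ k ω, η k ω = 1 / p ∨ η k ω = 0)
    (hdist : ∀ k, μ {ω | η k ω = 1 / p} = ENNReal.ofReal p)
    (ci cj : Fin m → ℝ) (yi yj : ℝ) (k r : Fin m) (hkr : k ≠ r) :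
    (∫ ω, (((∑ l, η l ω * ci l) - yi) * η k ω) * (((∑ l, η l ω * cj l) - yj) * η r ω) ∂μ)
      - (∫ ω, ((∑ l, η l ω * ci l) - yi) * η k ω ∂μ)
        * (∫ ω, ((∑ l, η l ω * cj l) - yj) * η r ω ∂μ)
    = (1 / p - 1) * (∑ k' ∈ (univ.erase k).erase r, ci k' * cj k')
      + (1 / p - 1) * cj k * ((∑ l ∈ (univ.erase k).erase r, ci l) - yi)
      + (1 / p - 1) * ci r * ((∑ l ∈ (univ.erase k).erase r, cj l) - yj)
      + (1 / p ^ 2 - 1 / p) * (ci r * cj r + ci k * cj k)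
      + (1 / p ^ 2 - 1) * ci r * cj k :=
  stmt_4_general μ m p hp η hmeas hindep hval hdist ci cj yi yj k r hkr
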